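/- There exists a constant C > 0 such that for all ε ∈ (0,1): P(D₂ ≤ √ε) ≤ C · ε. -/

import Mathlib

/-! The density `2(1 - x)` of `β(1,2)` vanishes linearly at `1`, so `P(1 - B₁ ≤ δ) ≤ 2 δ²`.
Since `B₁` is independent of `W = B₂ Z₃ > 0`, conditioning on `W` with `δ = √ε / W` gives
`P(D₂ ≤ √ε) ≤ 2 ε E[W⁻²]`. By independence `E[W⁻²] = E[B₂⁻²] E[Z₃⁻²]`, and both factors are finite
because the densities of `β(3,1)` and `GG(5,2)` vanish like `x²` and `x⁴` at `0`. -/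

open MeasureTheory ProbabilityTheory Real Filter

/-- Density of the Beta distribution `β(u,v)` with respect to Lebesgue measure. -/
noncomputable def betaPDFReal (u v x : ℝ) : ℝ :=
  if 0 < x ∧ x < 1 then
    Real.Gamma (u + v) / (Real.Gamma u * Real.Gamma v) * x ^ (u - 1) * (1 - x) ^ (v - 1)
  else 0

/-- The Beta distribution `β(u,v)` on `ℝ`. -/
noncomputable def betaMeasure (u v : ℝ) : Measure ℝ :=
  volume.withDensity fun x => ENNReal.ofReal (_root_.betaPDFReal u v x)

/-- Density of the generalized Gamma distribution `GG(u,v)` w.r.t. Lebesgue measure. -/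
noncomputable def genGammaPDFReal (u v x : ℝ) : ℝ :=
  if 0 < x then v / Real.Gamma (u / v) * x ^ (u - 1) * Real.exp (-(x ^ v)) else 0

/-- The generalized Gamma distribution `GG(u,v)` on `ℝ`. -/
noncomputable def genGammaMeasure (u v : ℝ) : Measure ℝ :=
  volume.withDensity fun x => ENNReal.ofReal (genGammaPDFReal u v x)

open Set
open scoped ENNReal

lemma measurable_betaPDFReal (u v : ℝ) : Measurable (_root_.betaPDFReal u v) :=
  Measurable.ite ((measurableSet_lt measurable_const measurable_id).inter
    (measurableSet_lt measurable_id measurable_const)) (by fun_prop) measurable_const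

lemma measurable_genGammaPDFReal (u v : ℝ) : Measurable (genGammaPDFReal u v) :=
  Measurable.ite (measurableSet_lt measurable_const measurable_id) (by fun_prop) measurable_const

lemma betaPDFReal_one_two (x : ℝ) :
    _root_.betaPDFReal 1 2 x = if 0 < x ∧ x < 1 then 2 * (1 - x) else 0 := by
  norm_num [_root_.betaPDFReal, Real.Gamma_ofNat_eq_factorial]

lemma betaPDFReal_three_one (x : ℝ) :
    _root_.betaPDFReal 3 1 x = if 0 < x ∧ x < 1 then 3 * x ^ 2 else 0 := by
  norm_num [_root_.betaPDFReal, Real.Gamma_ofNat_eq_factorial]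

lemma genGammaPDFReal_five_two (x : ℝ) :
    genGammaPDFReal 5 2 x =
      if 0 < x then 2 / Real.Gamma (5 / 2) * x ^ 4 * Real.exp (-x ^ 2) else 0 := by
  norm_num [genGammaPDFReal]

lemma withDensity_apply_le_mul_of_le_indicator {α : Type*} [MeasurableSpace α] {μ : Measure α}
    {f : α → ℝ≥0∞} {s t : Set α} (hs : MeasurableSet s) (ht : MeasurableSet t) {c : ℝ≥0∞}
    (hf : ∀ x ∈ s, f x ≤ t.indicator (fun _ => c) x) :
    μ.withDensity f s ≤ c * μ t :=
  calc μ.withDensity f s = ∫⁻ x in s, f x ∂μ := withDensity_apply _ hs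
    _ ≤ ∫⁻ x in s, t.indicator (fun _ => c) x ∂μ :=
        setLIntegral_mono (measurable_const.indicator ht) hf
    _ ≤ ∫⁻ x, t.indicator (fun _ => c) x ∂μ := setLIntegral_le_lintegral _ _
    _ = c * μ t := lintegral_indicator_const ht c

lemma ae_pos_withDensity_ofReal {f : ℝ → ℝ} (hf : Measurable f) (hf_nonpos : ∀ x ≤ 0, f x = 0) :
    ∀ᵐ x ∂volume.withDensity (fun x => ENNReal.ofReal (f x)), 0 < x := by
  refine (ae_withDensity_iff hf.ennreal_ofReal).2 (ae_of_all _ fun x hx => ?_)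
  by_contra! hx0
  simp [hf_nonpos x hx0] at hx

lemma ae_pos_betaMeasure (u v : ℝ) : ∀ᵐ x ∂_root_.betaMeasure u v, 0 < x :=
  ae_pos_withDensity_ofReal (_root_.measurable_betaPDFReal u v) fun x hx => by
    simp [_root_.betaPDFReal, hx.not_gt]

lemma ae_pos_genGammaMeasure (u v : ℝ) : ∀ᵐ x ∂genGammaMeasure u v, 0 < x :=
  ae_pos_withDensity_ofReal (measurable_genGammaPDFReal u v) fun x hx => by
    simp [genGammaPDFReal, hx.not_gt]

lemma betaMeasure_one_two_one_sub_le (δ : ℝ) :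
    _root_.betaMeasure 1 2 {x | 1 - x ≤ δ} ≤ 2 * ENNReal.ofReal δ ^ 2 := by
  have hdens : ∀ x ∈ {x : ℝ | 1 - x ≤ δ}, ENNReal.ofReal (_root_.betaPDFReal 1 2 x)
      ≤ (Icc (1 - δ) 1).indicator (fun _ => ENNReal.ofReal (2 * δ)) x := by
    intro x (hx : 1 - x ≤ δ)
    rw [betaPDFReal_one_two]
    split_ifs with h
    · rw [indicator_of_mem (by constructor <;> linarith)]
      exact ENNReal.ofReal_le_ofReal (by linarith)
    · simp
  calc _ ≤ ENNReal.ofReal (2 * δ) * volume (Icc (1 - δ) 1) :=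
        withDensity_apply_le_mul_of_le_indicator (measurableSet_le (by fun_prop) measurable_const)
          measurableSet_Icc hdens
    _ = 2 * ENNReal.ofReal δ ^ 2 := by
        rw [Real.volume_Icc, sub_sub_cancel, ENNReal.ofReal_mul zero_le_two, ENNReal.ofReal_ofNat,
          sq, mul_assoc]

lemma ofReal_mul_inv_ofReal_pow {a x : ℝ} (hx : 0 < x) (p : ℕ) :
    ENNReal.ofReal a * (ENNReal.ofReal x)⁻¹ ^ p = ENNReal.ofReal (a / x ^ p) := by
  rw [← ENNReal.ofReal_inv_of_pos hx, ← ENNReal.ofReal_pow (inv_nonneg.2 hx.le),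
    ← ENNReal.ofReal_mul' (by positivity), inv_pow, div_eq_mul_inv]

lemma lintegral_inv_sq_betaMeasure_three_one :
    ∫⁻ x, (ENNReal.ofReal x)⁻¹ ^ 2 ∂_root_.betaMeasure 3 1 ≤ 3 := by
  have hdens : ∀ x, ENNReal.ofReal (_root_.betaPDFReal 3 1 x) * (ENNReal.ofReal x)⁻¹ ^ 2
      ≤ (Ioo 0 1).indicator (fun _ => 3) x := by
    intro x
    rw [betaPDFReal_three_one]
    split_ifs with h
    · rw [indicator_of_mem (show x ∈ Ioo 0 1 from h), ofReal_mul_inv_ofReal_pow h.1,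
        mul_div_cancel_right₀ _ (pow_ne_zero 2 h.1.ne'), ENNReal.ofReal_ofNat]
    · simp
  calc _ = ∫⁻ x, ENNReal.ofReal (_root_.betaPDFReal 3 1 x) * (ENNReal.ofReal x)⁻¹ ^ 2 :=
        lintegral_withDensity_eq_lintegral_mul _ (_root_.measurable_betaPDFReal 3 1).ennreal_ofReal
          (by fun_prop)
    _ ≤ ∫⁻ x, (Ioo 0 1).indicator (fun _ => 3) x := lintegral_mono hdens
    _ = 3 := by simp [lintegral_indicator_const measurableSet_Ioo]

lemma sq_mul_exp_neg_sq_le (x : ℝ) : x ^ 2 * Real.exp (-x ^ 2) ≤ 2 * Real.exp (-x) := by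
  have hexp : Real.exp (x ^ 2 - x) * Real.exp (-x ^ 2) = Real.exp (-x) := by
    rw [← Real.exp_add]; ring_nf
  nlinarith [mul_le_mul_of_nonneg_right (Real.add_one_le_exp (x ^ 2 - x))
    (Real.exp_pos (-x ^ 2)).le, sq_nonneg (x - 1), Real.exp_pos (-x ^ 2)]

lemma lintegral_inv_sq_genGammaMeasure_five_two :
    ∫⁻ x, (ENNReal.ofReal x)⁻¹ ^ 2 ∂genGammaMeasure 5 2 ≤
      ENNReal.ofReal (4 / Real.Gamma (5 / 2)) := by
  have hΓ : 0 < Real.Gamma (5 / 2) := Real.Gamma_pos_of_pos (by norm_num)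
  have hdens : ∀ x, ENNReal.ofReal (genGammaPDFReal 5 2 x) * (ENNReal.ofReal x)⁻¹ ^ 2
      ≤ ENNReal.ofReal (4 / Real.Gamma (5 / 2)) *
        (Ioi 0).indicator (fun x => ENNReal.ofReal (Real.exp (-x))) x := by
    intro x
    rw [genGammaPDFReal_five_two]
    split_ifs with h
    · rw [indicator_of_mem (mem_Ioi.2 h), ofReal_mul_inv_ofReal_pow h,
        ← ENNReal.ofReal_mul (by positivity)]
      refine ENNReal.ofReal_le_ofReal ?_
      calc 2 / Real.Gamma (5 / 2) * x ^ 4 * Real.exp (-x ^ 2) / x ^ 2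
          = 2 / Real.Gamma (5 / 2) * (x ^ 2 * Real.exp (-x ^ 2)) := by field_simp
        _ ≤ 2 / Real.Gamma (5 / 2) * (2 * Real.exp (-x)) :=
          mul_le_mul_of_nonneg_left (sq_mul_exp_neg_sq_le x) (by positivity)
        _ = 4 / Real.Gamma (5 / 2) * Real.exp (-x) := by ring
    · simp
  have hexp : ∫⁻ x in Ioi 0, ENNReal.ofReal (Real.exp (-x)) = 1 := by
    rw [← ofReal_integral_eq_lintegral_ofReal (integrableOn_exp_neg_Ioi 0)
      (ae_of_all _ fun x => (Real.exp_pos _).le), integral_exp_neg_Ioi_zero, ENNReal.ofReal_one]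
  calc _ = ∫⁻ x, ENNReal.ofReal (genGammaPDFReal 5 2 x) * (ENNReal.ofReal x)⁻¹ ^ 2 :=
        lintegral_withDensity_eq_lintegral_mul _ (measurable_genGammaPDFReal 5 2).ennreal_ofReal
          (by fun_prop)
    _ ≤ ∫⁻ x, ENNReal.ofReal (4 / Real.Gamma (5 / 2)) *
          (Ioi 0).indicator (fun x => ENNReal.ofReal (Real.exp (-x))) x := lintegral_mono hdens
    _ = ENNReal.ofReal (4 / Real.Gamma (5 / 2)) := by
        rw [lintegral_const_mul _ ((by fun_prop : Measurable fun x : ℝ =>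
          ENNReal.ofReal (Real.exp (-x))).indicator measurableSet_Ioi),
          lintegral_indicator measurableSet_Ioi, hexp, mul_one]

section Independence

variable {Ω : Type*} [MeasurableSpace Ω] {P : Measure Ω}

lemma lintegral_inv_ofReal_mul_pow_of_indepFun {Y Z : Ω → ℝ} (hY : Measurable Y)
    (hZ : Measurable Z) (hYZ : IndepFun Y Z P) (hY_nonneg : ∀ᵐ ω ∂P, 0 ≤ Y ω) (p : ℕ) :
    ∫⁻ ω, (ENNReal.ofReal (Y ω * Z ω))⁻¹ ^ p ∂P =
      (∫⁻ ω, (ENNReal.ofReal (Y ω))⁻¹ ^ p ∂P) * ∫⁻ ω, (ENNReal.ofReal (Z ω))⁻¹ ^ p ∂P := by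
  have hsplit : ∀ᵐ ω ∂P, (ENNReal.ofReal (Y ω * Z ω))⁻¹ ^ p =
      (ENNReal.ofReal (Y ω))⁻¹ ^ p * (ENNReal.ofReal (Z ω))⁻¹ ^ p := by
    filter_upwards [hY_nonneg] with ω hω
    rw [ENNReal.ofReal_mul hω, ENNReal.mul_inv (.inr ENNReal.ofReal_ne_top)
      (.inl ENNReal.ofReal_ne_top), mul_pow]
  have hinv : Measurable fun y : ℝ => (ENNReal.ofReal y)⁻¹ ^ p := by fun_prop
  rw [lintegral_congr_ae hsplit]
  exact lintegral_mul_eq_lintegral_mul_lintegral_of_indepFun (hinv.comp hY) (hinv.comp hZ)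
    (hYZ.comp hinv hinv)

lemma measure_mul_le_of_indepFun {Y W : Ω → ℝ} [IsFiniteMeasure P] (hY : Measurable Y)
    (hW : Measurable W) (hYW : IndepFun Y W P) (hW_pos : ∀ᵐ ω ∂P, 0 < W ω) {p : ℕ} {c : ℝ≥0∞}
    (hY_small : ∀ δ, 0 ≤ δ → P {ω | Y ω ≤ δ} ≤ c * ENNReal.ofReal δ ^ p) {t : ℝ} (ht : 0 ≤ t) :
    P {ω | Y ω * W ω ≤ t} ≤
      c * ENNReal.ofReal t ^ p * ∫⁻ ω, (ENNReal.ofReal (W ω))⁻¹ ^ p ∂P := by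
  set s : Set (ℝ × ℝ) := {q | q.2 * q.1 ≤ t}
  have hs : MeasurableSet s := measurableSet_le (by fun_prop) measurable_const
  have hslice : ∀ᵐ w ∂P.map W,
      P.map Y (Prod.mk w ⁻¹' s) ≤ c * ENNReal.ofReal t ^ p * (ENNReal.ofReal w)⁻¹ ^ p := by
    filter_upwards [(ae_map_iff hW.aemeasurable measurableSet_Ioi).2 hW_pos] with w hw
    have hpre : Prod.mk w ⁻¹' s = Iic (t / w) := by
      ext y; exact (le_div_iff₀ hw).symm
    rw [hpre, Measure.map_apply hY measurableSet_Iic, mul_assoc, ← mul_pow, ← div_eq_mul_inv,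
      ← ENNReal.ofReal_div_of_pos hw]
    exact hY_small _ (div_nonneg ht hw.le)
  calc P {ω | Y ω * W ω ≤ t} = P.map (fun ω => (W ω, Y ω)) s := by
        rw [Measure.map_apply (hW.prodMk hY) hs]; rfl
    _ = ∫⁻ w, P.map Y (Prod.mk w ⁻¹' s) ∂P.map W := by
        rw [(indepFun_iff_map_prod_eq_prod_map_map hW.aemeasurable hY.aemeasurable).1 hYW.symm,
          Measure.prod_apply hs]
    _ ≤ ∫⁻ w, c * ENNReal.ofReal t ^ p * (ENNReal.ofReal w)⁻¹ ^ p ∂P.map W :=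
        lintegral_mono_ae hslice
    _ = c * ENNReal.ofReal t ^ p * ∫⁻ ω, (ENNReal.ofReal (W ω))⁻¹ ^ p ∂P := by
        rw [lintegral_const_mul _ (by fun_prop), lintegral_map (by fun_prop) hW]

lemma measure_one_sub_le_of_map_eq_betaMeasure_one_two {B : Ω → ℝ} (hB : Measurable B)
    (hlaw : P.map B = _root_.betaMeasure 1 2) (δ : ℝ) :
    P {ω | 1 - B ω ≤ δ} ≤ 2 * ENNReal.ofReal δ ^ 2 :=
  calc P {ω | 1 - B ω ≤ δ} = P.map B {x | 1 - x ≤ δ} :=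
        (Measure.map_apply hB (measurableSet_le (measurable_const.sub measurable_id)
          measurable_const)).symm
    _ ≤ 2 * ENNReal.ofReal δ ^ 2 := hlaw ▸ betaMeasure_one_two_one_sub_le δ

lemma lintegral_inv_sq_mul_le_of_indepFun {B Z : Ω → ℝ} (hB : Measurable B) (hZ : Measurable Z)
    (hBZ : IndepFun B Z P) (hlawB : P.map B = _root_.betaMeasure 3 1)
    (hlawZ : P.map Z = genGammaMeasure 5 2) :
    ∫⁻ ω, (ENNReal.ofReal (B ω * Z ω))⁻¹ ^ 2 ∂P ≤ 3 * ENNReal.ofReal (4 / Real.Gamma (5 / 2)) := by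
  have hinv : Measurable fun y : ℝ => (ENNReal.ofReal y)⁻¹ ^ 2 := by fun_prop
  have hB_nonneg : ∀ᵐ ω ∂P, 0 ≤ B ω :=
    (ae_of_ae_map hB.aemeasurable (hlawB ▸ ae_pos_betaMeasure 3 1)).mono fun _ h => h.le
  rw [lintegral_inv_ofReal_mul_pow_of_indepFun hB hZ hBZ hB_nonneg, ← lintegral_map hinv hB,
    ← lintegral_map hinv hZ, hlawB, hlawZ]
  exact mul_le_mul' lintegral_inv_sq_betaMeasure_three_one
    lintegral_inv_sq_genGammaMeasure_five_two

end Independence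

/-- There is `C > 0` such that for all `ε ∈ (0,1)`, `P(D₂ ≤ √ε) ≤ C * ε`,
where `D₂ = (1-B₁)B₂Z₃`. -/
theorem eve_bound {Ω : Type*} [MeasurableSpace Ω] (P : Measure Ω) [IsProbabilityMeasure P]
    (B₁ B₂ Z₃ : Ω → ℝ) (hB₁ : Measurable B₁) (hB₂ : Measurable B₂) (hZ₃ : Measurable Z₃)
    (hindep : iIndepFun ![B₁, B₂, Z₃] P)
    (hlaw₁ : P.map B₁ = _root_.betaMeasure 1 2)
    (hlaw₂ : P.map B₂ = _root_.betaMeasure 3 1)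
    (hlaw₃ : P.map Z₃ = genGammaMeasure 5 2) :
    ∃ C : ℝ, 0 < C ∧ ∀ ε : ℝ, 0 < ε → ε < 1 →
      P {ω | (1 - B₁ ω) * B₂ ω * Z₃ ω ≤ Real.sqrt ε} ≤ ENNReal.ofReal (C * ε) := by
  have hΓ : 0 < Real.Gamma (5 / 2) := Real.Gamma_pos_of_pos (by norm_num)
  have hmeas : ∀ i, Measurable (![B₁, B₂, Z₃] i) := by
    intro i; fin_cases i <;> assumption
  have hB₂_pos : ∀ᵐ ω ∂P, 0 < B₂ ω :=
    ae_of_ae_map hB₂.aemeasurable (hlaw₂ ▸ ae_pos_betaMeasure 3 1)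
  have hZ₃_pos : ∀ᵐ ω ∂P, 0 < Z₃ ω :=
    ae_of_ae_map hZ₃.aemeasurable (hlaw₃ ▸ ae_pos_genGammaMeasure 5 2)
  have hindep₁ : IndepFun (fun ω => 1 - B₁ ω) (fun ω => B₂ ω * Z₃ ω) P :=
    (hindep.indepFun_prodMk hmeas 1 2 0 (by decide) (by decide)).symm.comp
      (measurable_const.sub measurable_id) (measurable_fst.mul measurable_snd)
  have hindep₂₃ : IndepFun B₂ Z₃ P := hindep.indepFun (i := 1) (j := 2) (by decide)
  refine ⟨24 / Real.Gamma (5 / 2), by positivity, fun ε hε _ => ?_⟩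
  calc P {ω | (1 - B₁ ω) * B₂ ω * Z₃ ω ≤ Real.sqrt ε}
      ≤ 2 * ENNReal.ofReal (Real.sqrt ε) ^ 2 *
          ∫⁻ ω, (ENNReal.ofReal (B₂ ω * Z₃ ω))⁻¹ ^ 2 ∂P := by
        simpa only [mul_assoc] using measure_mul_le_of_indepFun (hB₁.const_sub 1) (by fun_prop)
          hindep₁ (hB₂_pos.and hZ₃_pos |>.mono fun _ h => mul_pos h.1 h.2)
          (fun δ _ => measure_one_sub_le_of_map_eq_betaMeasure_one_two hB₁ hlaw₁ δ)
          (Real.sqrt_nonneg ε)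
    _ ≤ 2 * ENNReal.ofReal (Real.sqrt ε) ^ 2 * (3 * ENNReal.ofReal (4 / Real.Gamma (5 / 2))) := by
        gcongr
        exact lintegral_inv_sq_mul_le_of_indepFun hB₂ hZ₃ hindep₂₃ hlaw₂ hlaw₃
    _ = ENNReal.ofReal (24 / Real.Gamma (5 / 2) * ε) := by
        rw [← ENNReal.ofReal_pow (Real.sqrt_nonneg ε), Real.sq_sqrt hε.le,
          show 24 / Real.Gamma (5 / 2) * ε = 2 * ε * (3 * (4 / Real.Gamma (5 / 2))) by ring,
          ENNReal.ofReal_mul (by positivity), ENNReal.ofReal_mul zero_le_two,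
          ENNReal.ofReal_mul zero_le_three, ENNReal.ofReal_ofNat, ENNReal.ofReal_ofNat]
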